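/- Let ϱ be as above with Ξ‴(x) ≤ 0 for x > 0 and Ξ‴(x) ≥ 0 for x < 0. Fix r ≥ 0 and s > 0. Then the equation x = Ξ′(rx + s) has a unique positive solution t_ϱ, this t_ϱ is the unique global maximizer of φ(x) = rx²/2 + sx − x(Ξ′)⁻¹(x) + Ξ((Ξ′)⁻¹(x)), and moreover r·Ξ″(r·t_ϱ + s) < 1. -/

import Mathlib

/-!
`Ξ` is the cumulant generating function of `ϱ`: it is smooth and even, `Ξ'(t)` is the mean and
`Ξ''(t) > 0` the variance of the tilted measure `e^{ty - Ξ(t)} dϱ(y)`, so `Ξ'` is an odd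
increasing function bounded by `1`. In the variable `u = r t + s` the fixed-point equation reads
`h(u) = r Ξ'(u) + s - u = 0`. The sign condition on `Ξ‴` makes `Ξ'`, hence `h`, concave on
`[0, ∞)`; as `h(0) = s > 0` and `h(r + s + 1) < 0`, `h` has exactly one positive root `u`, is
positive before it and negative after it, and `h'(u) = r Ξ''(u) - 1 < 0`.
For the maximisation, `x = Ξ'(v)` gives `φ(Ξ'(v))' = Ξ''(v) h(v)`, so `φ ∘ Ξ'` increases on
`[0, u]` and decreases on `[u, ∞)`; negative `v` lose to `-v` because
`φ(Ξ'(-v)) = φ(Ξ'(v)) - 2 s Ξ'(v)`.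
-/

open MeasureTheory ProbabilityTheory Set

section CumulantGeneratingFunction

variable {Ω : Type*} [MeasurableSpace Ω] {μ : Measure Ω} {X : Ω → ℝ} {t : ℝ}

lemma integrableExpSet_eq_univ_of_mem_Icc [IsFiniteMeasure μ] {a b : ℝ} (hX : AEMeasurable X μ)
    (h : ∀ᵐ ω ∂μ, X ω ∈ Icc a b) : integrableExpSet X μ = univ :=
  eq_univ_of_forall fun _ => integrable_exp_mul_of_mem_Icc hX h

lemma deriv_cgf_le [IsProbabilityMeasure μ] {b : ℝ} (ht : t ∈ interior (integrableExpSet X μ))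
    (h : ∀ᵐ ω ∂μ, X ω ≤ b) : deriv (cgf X μ) t ≤ b := by
  have := isProbabilityMeasure_tilted (interior_subset (s := integrableExpSet X μ) ht)
  rw [← integral_tilted_mul_self ht]
  calc (μ.tilted (t * X ·))[X] ≤ ∫ _, b ∂(μ.tilted (t * X ·)) :=
        integral_mono_ae ((memLp_tilted_mul ht 1).integrable le_rfl) (integrable_const b)
          ((tilted_absolutelyContinuous μ _).ae_le h)
    _ = b := by simp

lemma iteratedDeriv_two_cgf_pos [IsProbabilityMeasure μ]
    (ht : t ∈ interior (integrableExpSet X μ)) (hX : ∀ c : ℝ, ¬ X =ᵐ[μ] fun _ => c) :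
    0 < iteratedDeriv 2 (cgf X μ) t := by
  have hint : Integrable (fun ω => Real.exp (t * X ω)) μ :=
    interior_subset (s := integrableExpSet X μ) ht
  have := isProbabilityMeasure_tilted hint
  rw [← variance_tilted_mul ht]
  refine (variance_nonneg _ _).lt_of_ne fun h0 => hX (μ.tilted (t * X ·))[X] ?_
  exact (absolutelyContinuous_tilted hint).ae_le
    (ae_eq_integral_of_variance_eq_zero (memLp_tilted_mul ht 2) h0.symm)

end CumulantGeneratingFunction

lemma even_cgf_id {μ : Measure ℝ} (hμ : μ.map (fun x => -x) = μ) : Function.Even (cgf id μ) := by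
  intro t
  rw [← cgf_neg]
  conv_rhs => rw [← hμ]
  simp only [cgf, mgf_id_map measurable_neg.aemeasurable]
  rfl

lemma not_ae_eq_const_of_ne_dirac {μ : Measure ℝ} [IsProbabilityMeasure μ]
    (h : ∀ a, μ ≠ Measure.dirac a) (c : ℝ) : ¬ (id : ℝ → ℝ) =ᵐ[μ] fun _ => c := fun hc =>
  h c (by simpa [Measure.map_id, Measure.map_const] using Measure.map_congr hc)

lemma Function.Even.deriv {f : ℝ → ℝ} (hf : Function.Even f) : Function.Odd (deriv f) := by
  intro x
  have h := deriv_comp_neg (f := f) (x := -x)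
  rw [funext hf, neg_neg] at h
  linarith

section ConcaveOnIci

variable {f : ℝ → ℝ}

lemma ConcaveOn.lt_of_nonpos_of_lt (hf : ConcaveOn ℝ (Ici 0) f) (h0 : 0 < f 0) {a b : ℝ}
    (ha : 0 < a) (hfa : f a ≤ 0) (hab : a < b) : f b < f a :=
  hf.lt_right_of_left_lt self_mem_Ici (ha.trans hab).le
    (by rw [openSegment_eq_Ioo (ha.trans hab)]; exact ⟨ha, hab⟩) (hfa.trans_lt h0)

lemma ConcaveOn.pos_of_lt_of_nonneg (hf : ConcaveOn ℝ (Ici 0) f) (h0 : 0 < f 0) {a x : ℝ}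
    (hx : 0 ≤ x) (hxa : x < a) (hfa : 0 ≤ f a) : 0 < f x := by
  rcases hx.eq_or_lt with rfl | hx
  · exact h0
  · by_contra! hfx
    exact (hf.lt_of_nonpos_of_lt h0 hx hfx hxa).not_ge (hfx.trans hfa)

lemma ConcaveOn.neg_of_hasDerivAt_of_nonpos (hf : ConcaveOn ℝ (Ici 0) f) (h0 : 0 < f 0)
    {a f' : ℝ} (ha : 0 < a) (hfa : f a ≤ 0) (hd : HasDerivAt f f' a) : f' < 0 := by
  have hslope := hf.neg.slope_le_of_hasDerivAt self_mem_Ici ha.le ha hd.neg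
  have : 0 < slope (-f) 0 a := by
    rw [slope_def_field]
    simp only [Pi.neg_apply, sub_zero]
    exact div_pos (by linarith) ha
  linarith

lemma ConcaveOn.eq_of_eq_zero (hf : ConcaveOn ℝ (Ici 0) f) (h0 : 0 < f 0) {a b : ℝ}
    (ha : 0 < a) (hfa : f a = 0) (hb : 0 < b) (hfb : f b = 0) : b = a := by
  by_contra hne
  rcases lt_or_gt_of_ne hne with hba | hab
  · exact (hf.lt_of_nonpos_of_lt h0 hb hfb.le hba).ne (hfa.trans hfb.symm)
  · exact (hf.lt_of_nonpos_of_lt h0 ha hfa.le hab).ne (hfb.trans hfa.symm)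

end ConcaveOnIci

lemma lt_of_deriv_pos_of_deriv_neg {ψ : ℝ → ℝ} {a b x : ℝ} (hψ : Continuous ψ)
    (hpos : ∀ y ∈ Ioo a b, 0 < deriv ψ y) (hneg : ∀ y, b < y → deriv ψ y < 0)
    (hx : a ≤ x) (hxb : x ≠ b) : ψ x < ψ b := by
  rcases hxb.lt_or_gt with hxb | hbx
  · exact strictMonoOn_of_deriv_pos (convex_Icc a b) hψ.continuousOn (by simpa using hpos)
      ⟨hx, hxb.le⟩ ⟨hx.trans hxb.le, le_rfl⟩ hxb
  · exact strictAntiOn_of_deriv_neg (convex_Ici b) hψ.continuousOn (by simpa using hneg)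
      self_mem_Ici hbx.le hbx

section SecondDerivative

variable {Ξ : ℝ → ℝ}

lemma hasDerivAt_deriv_of_contDiff (hΞ : ContDiff ℝ 2 Ξ) (v : ℝ) :
    HasDerivAt (deriv Ξ) (iteratedDeriv 2 Ξ v) v := by
  have hF : Differentiable ℝ (deriv Ξ) := by
    simpa using hΞ.differentiable_iteratedDeriv 1 (by norm_num)
  rw [show iteratedDeriv 2 Ξ v = deriv (deriv Ξ) v by simp [iteratedDeriv_succ]]
  exact (hF v).hasDerivAt

lemma strictMono_deriv_of_iteratedDeriv_two_pos (hΞ : ContDiff ℝ 2 Ξ)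
    (hpos : ∀ t, 0 < iteratedDeriv 2 Ξ t) : StrictMono (deriv Ξ) :=
  strictMono_of_deriv_pos fun v => (hasDerivAt_deriv_of_contDiff hΞ v).deriv ▸ hpos v

lemma concaveOn_deriv_of_iteratedDeriv_three_nonpos (hΞ : ContDiff ℝ 3 Ξ)
    (h : ∀ x, 0 < x → iteratedDeriv 3 Ξ x ≤ 0) : ConcaveOn ℝ (Ici 0) (deriv Ξ) := by
  have hd1 : Differentiable ℝ (deriv Ξ) := by
    simpa using hΞ.differentiable_iteratedDeriv 1 (by norm_num)
  have hd2 : Differentiable ℝ (deriv (deriv Ξ)) := by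
    simpa [iteratedDeriv_succ] using hΞ.differentiable_iteratedDeriv 2 (by norm_num)
  refine concaveOn_of_deriv2_nonpos (convex_Ici 0) hd1.continuous.continuousOn
    hd1.differentiableOn hd2.differentiableOn fun x hx => ?_
  rw [interior_Ici] at hx
  simpa [← iteratedDeriv_eq_iterate, ← iteratedDeriv_succ'] using h x hx

end SecondDerivative

-- With `F = Ξ'`, the function below is `φ ∘ Ξ'` for the objective `φ` of the theorem.
lemma hasDerivAt_objective {Ξ F : ℝ → ℝ} {v F' : ℝ} (hΞ : HasDerivAt Ξ (F v) v)
    (hF : HasDerivAt F F' v) (r s : ℝ) :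
    HasDerivAt (fun w => r * F w ^ 2 / 2 + s * F w - F w * w + Ξ w)
      (F' * (r * F v + s - v)) v := by
  refine (((((hF.pow 2).const_mul r).div_const 2).add (hF.const_mul s)).sub
    (hF.mul (hasDerivAt_id v))).add hΞ |>.congr_deriv ?_
  simp only [id]
  ring

lemma objective_lt_of_sign {Ξ : ℝ → ℝ} {r s u v : ℝ} (hΞ : ContDiff ℝ 2 Ξ)
    (heven : Function.Even Ξ) (hpos : ∀ t, 0 < iteratedDeriv 2 Ξ t) (hs : 0 < s)
    (hbelow : ∀ w ∈ Ico 0 u, 0 < r * deriv Ξ w + s - w)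
    (habove : ∀ w, u < w → r * deriv Ξ w + s - w < 0) (hvu : v ≠ u) :
    r * deriv Ξ v ^ 2 / 2 + s * deriv Ξ v - deriv Ξ v * v + Ξ v <
      r * deriv Ξ u ^ 2 / 2 + s * deriv Ξ u - deriv Ξ u * u + Ξ u := by
  set F := deriv Ξ
  set ψ := fun w => r * F w ^ 2 / 2 + s * F w - F w * w + Ξ w
  have hψd : ∀ w, HasDerivAt ψ (iteratedDeriv 2 Ξ w * (r * F w + s - w)) w := fun w =>
    hasDerivAt_objective ((hΞ.differentiable (by norm_num) w).hasDerivAt)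
      (hasDerivAt_deriv_of_contDiff hΞ w) r s
  have hψc : Continuous ψ := continuous_iff_continuousAt.2 fun w => (hψd w).continuousAt
  have hψ : ∀ w, 0 ≤ w → w ≠ u → ψ w < ψ u := fun w hw hwu =>
    lt_of_deriv_pos_of_deriv_neg hψc
      (fun y hy => (hψd y).deriv ▸ mul_pos (hpos y) (hbelow y ⟨hy.1.le, hy.2⟩))
      (fun y hy => (hψd y).deriv ▸ mul_neg_of_pos_of_neg (hpos y) (habove y hy)) hw hwu
  show ψ v < ψ u
  rcases lt_or_ge v 0 with hv | hv
  · have hFv : F v < 0 :=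
      heven.deriv.map_zero ▸ strictMono_deriv_of_iteratedDeriv_two_pos hΞ hpos hv
    have hreflect : ψ (-v) = ψ v - 2 * s * F v := by
      simp only [ψ, F, heven.deriv v, heven v]
      ring
    calc ψ v < ψ (-v) := by nlinarith
      _ ≤ ψ u := (eq_or_ne (-v) u).elim (fun h => h ▸ le_rfl) fun h =>
          (hψ _ (by linarith) h).le
  · exact hψ v hv hvu

lemma exists_pos_root_of_le_one {F : ℝ → ℝ} {r s : ℝ} (hF : Continuous F) (hle : ∀ t, F t ≤ 1)
    (hF0 : F 0 = 0) (hr : 0 ≤ r) (hs : 0 < s) : ∃ u, 0 < u ∧ r * F u + s - u = 0 := by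
  have hb : r * F (r + s + 1) + s - (r + s + 1) < 0 := by nlinarith [hle (r + s + 1)]
  obtain ⟨u, hu, hu0⟩ := intermediate_value_Ioo' (by positivity : (0 : ℝ) ≤ r + s + 1)
    (by fun_prop : Continuous fun u => r * F u + s - u).continuousOn ⟨hb, by simpa [hF0]⟩
  exact ⟨u, hu.1, hu0⟩

theorem exists_unique_pos_fixedPoint_isMax {Ξ : ℝ → ℝ} (hΞ : ContDiff ℝ 3 Ξ)
    (heven : Function.Even Ξ) (hle : ∀ t, deriv Ξ t ≤ 1) (hpos : ∀ t, 0 < iteratedDeriv 2 Ξ t)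
    (hGHS : ∀ x, 0 < x → iteratedDeriv 3 Ξ x ≤ 0) {r s : ℝ} (hr : 0 ≤ r) (hs : 0 < s) :
    ∃ t : ℝ, 0 < t ∧ t = deriv Ξ (r * t + s) ∧
      (∀ t' : ℝ, 0 < t' → t' = deriv Ξ (r * t' + s) → t' = t) ∧
      (∀ x ∈ Set.range (deriv Ξ), x ≠ t →
        r * x ^ 2 / 2 + s * x - x * Function.invFun (deriv Ξ) x +
            Ξ (Function.invFun (deriv Ξ) x) <
          r * t ^ 2 / 2 + s * t - t * Function.invFun (deriv Ξ) t +
            Ξ (Function.invFun (deriv Ξ) t)) ∧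
      r * iteratedDeriv 2 Ξ (r * t + s) < 1 := by
  have hΞ2 : ContDiff ℝ 2 Ξ := hΞ.of_le (by norm_num)
  set F := deriv Ξ
  have hFmono : StrictMono F := strictMono_deriv_of_iteratedDeriv_two_pos hΞ2 hpos
  have hF0 : F 0 = 0 := heven.deriv.map_zero
  set h := fun u => r * F u + s - u
  have hhd : ∀ u, HasDerivAt h (r * iteratedDeriv 2 Ξ u - 1) u := fun u =>
    (((hasDerivAt_deriv_of_contDiff hΞ2 u).const_mul r).add_const s).sub (hasDerivAt_id u)
  have hconc : ConcaveOn ℝ (Ici 0) h :=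
    (((concaveOn_deriv_of_iteratedDeriv_three_nonpos hΞ hGHS).smul hr).add_const s).sub
      (convexOn_id (convex_Ici 0))
  have hh0 : 0 < h 0 := by simp [h, hF0, hs]
  obtain ⟨u, hu, hhu⟩ :=
    exists_pos_root_of_le_one (hΞ.continuous_deriv (by norm_num)) hle hF0 hr hs
  have hfix : r * F u + s = u := by linarith [show h u = 0 from hhu]
  refine ⟨F u, hF0 ▸ hFmono hu, by rw [hfix], fun t' ht' heq => ?_, ?_, ?_⟩
  · have hroot : h (r * t' + s) = 0 := by
      simp only [h]
      rw [← heq]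
      ring
    rw [heq, hconc.eq_of_eq_zero hh0 hu hhu (by positivity) hroot]
  · rintro _ ⟨v, rfl⟩ hne
    rw [Function.leftInverse_invFun hFmono.injective v,
      Function.leftInverse_invFun hFmono.injective u]
    exact objective_lt_of_sign hΞ2 heven hpos hs
      (fun w hw => hconc.pos_of_lt_of_nonneg hh0 hw.1 hw.2 hhu.ge)
      (fun w hw => hhu ▸ hconc.lt_of_nonpos_of_lt hh0 hu hhu.le hw) fun h => hne (h ▸ rfl)
  · have := hconc.neg_of_hasDerivAt_of_nonpos hh0 hu hhu.le (hhd u)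
    rw [hfix]
    linarith

theorem stmt_12_general (ϱ : Measure ℝ) [IsProbabilityMeasure ϱ]
    (hsupp : ϱ ((Set.Icc (-1 : ℝ) 1)ᶜ) = 0)
    (hnd : ∀ a : ℝ, ϱ ≠ Measure.dirac a)
    (hsym : ϱ.map (fun x => -x) = ϱ)
    (Ξ : ℝ → ℝ) (hΞ : ∀ t, Ξ t = Real.log (∫ y, Real.exp (t * y) ∂ϱ))
    (hGHS₁ : ∀ x : ℝ, 0 < x → iteratedDeriv 3 Ξ x ≤ 0)
    (r s : ℝ) (hr : 0 ≤ r) (hs : 0 < s) :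
    ∃ t : ℝ, 0 < t ∧ t = deriv Ξ (r * t + s) ∧
      (∀ t' : ℝ, 0 < t' → t' = deriv Ξ (r * t' + s) → t' = t) ∧
      (∀ x ∈ Set.range (deriv Ξ), x ≠ t →
        r * x ^ 2 / 2 + s * x - x * Function.invFun (deriv Ξ) x +
            Ξ (Function.invFun (deriv Ξ) x) <
          r * t ^ 2 / 2 + s * t - t * Function.invFun (deriv Ξ) t +
            Ξ (Function.invFun (deriv Ξ) t)) ∧
      r * iteratedDeriv 2 Ξ (r * t + s) < 1 := by
  obtain rfl : Ξ = cgf id ϱ := funext hΞ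
  have hbound : ∀ᵐ y ∂ϱ, id y ∈ Icc (-1 : ℝ) 1 := ae_iff.2 hsupp
  have hint : ∀ t, t ∈ interior (integrableExpSet id ϱ) := by
    simp [integrableExpSet_eq_univ_of_mem_Icc aemeasurable_id hbound]
  refine exists_unique_pos_fixedPoint_isMax ?_ (even_cgf_id hsym)
    (fun t => deriv_cgf_le (hint t) (hbound.mono fun _ hy => hy.2))
    (fun t => iteratedDeriv_two_cgf_pos (hint t) (not_ae_eq_const_of_ne_dirac hnd)) hGHS₁ hr hs
  exact (analyticOnNhd_cgf.mono fun t _ => hint t).contDiff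

/-- For `r ≥ 0` and `s > 0`, under the GHS-type sign condition on `Ξ‴`, the equation
`x = Ξ′(rx + s)` has a unique positive solution `t_ϱ`; it is the unique global
maximizer of `φ(x) = rx²/2 + sx − x(Ξ′)⁻¹(x) + Ξ((Ξ′)⁻¹(x))` over the range of `Ξ′`,
and `r · Ξ″(r t_ϱ + s) < 1`. -/
theorem stmt_12 (ϱ : Measure ℝ) [IsProbabilityMeasure ϱ]
    (hsupp : ϱ ((Set.Icc (-1 : ℝ) 1)ᶜ) = 0)
    (hnd : ∀ a : ℝ, ϱ ≠ Measure.dirac a)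
    (hsym : ϱ.map (fun x => -x) = ϱ)
    (Ξ : ℝ → ℝ) (hΞ : ∀ t, Ξ t = Real.log (∫ y, Real.exp (t * y) ∂ϱ))
    (hGHS₁ : ∀ x : ℝ, 0 < x → iteratedDeriv 3 Ξ x ≤ 0)
    (hGHS₂ : ∀ x : ℝ, x < 0 → 0 ≤ iteratedDeriv 3 Ξ x)
    (r s : ℝ) (hr : 0 ≤ r) (hs : 0 < s) :
    ∃ t : ℝ, 0 < t ∧ t = deriv Ξ (r * t + s) ∧
      (∀ t' : ℝ, 0 < t' → t' = deriv Ξ (r * t' + s) → t' = t) ∧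
      (∀ x ∈ Set.range (deriv Ξ), x ≠ t →
        r * x ^ 2 / 2 + s * x - x * Function.invFun (deriv Ξ) x +
            Ξ (Function.invFun (deriv Ξ) x) <
          r * t ^ 2 / 2 + s * t - t * Function.invFun (deriv Ξ) t +
            Ξ (Function.invFun (deriv Ξ) t)) ∧
      r * iteratedDeriv 2 Ξ (r * t + s) < 1 :=
  stmt_12_general ϱ hsupp hnd hsym Ξ hΞ hGHS₁ r s hr hs
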